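/- Assume the source condition x† − x₀ = A^* λ† holds for some λ† = (λ_1†, …, λ_p†) ∈ Y. With u_n := λ_n + n(λ_n − λ_{n−1}) and r_n := Σ_{i=1}^p (1/η_i) ‖u_{n,i} − λ_i†‖², for all integers n ≥ 0 there holds E[r_{n+1} + ((n+2)/p) ‖x_n − x†‖²] ≤ E[r_n + (n/p) ‖x_{n−1} − x†‖²] + (1/p) Σ_{i=1}^p η_i E[‖A_i x_n − y_i‖²]. -/

import Mathlib

/-- Expectation with respect to the first `m` i.i.d. uniformly distributed indices:
for a quantity `f` determined by the coordinates `i_0, …, i_{m-1}` of the sample path,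
`avg p hp m f = p^{-m} ∑_{(i_0,…,i_{m-1}) ∈ {1,…,p}^m} f`. -/
noncomputable def avg (p : ℕ) (hp : 0 < p) (m : ℕ) (f : (ℕ → Fin p) → ℝ) : ℝ :=
  (∑ σ : Fin m → Fin p, f (fun k => if h : k < m then σ ⟨k, h⟩ else ⟨0, hp⟩)) / (p : ℝ) ^ m

lemma avg_succ (p : ℕ) (hp : 0 < p) (n : ℕ) (f : (ℕ → Fin p) → ℝ) :
    avg p hp (n + 1) f
      = avg p hp n (fun ω => (∑ i : Fin p, f (Function.update ω n i)) / p) := by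
  unfold avg
  rw [← Finset.sum_div, div_div, pow_succ, mul_comm ((p:ℝ)^n)]
  congr 1
  have e : ∀ (τ : Fin n → Fin p) (i : Fin p),
      (fun k => if h : k < n + 1 then (Fin.snoc τ i : Fin (n+1) → Fin p) ⟨k, h⟩ else ⟨0, hp⟩)
        = Function.update (fun k => if h : k < n then τ ⟨k, h⟩ else ⟨0, hp⟩) n i := by
    intro τ i; funext k
    rcases lt_trichotomy k n with hk | hk | hk
    · rw [Function.update_of_ne (by omega), dif_pos (by omega : k < n + 1), dif_pos hk]
      simp [Fin.snoc, hk]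
    · subst hk
      rw [Function.update_self, dif_pos (by omega : k < k + 1)]
      simp [Fin.snoc]
    · rw [Function.update_of_ne (by omega), dif_neg (by omega), dif_neg (by omega)]
  let E : (Fin n → Fin p) × Fin p ≃ (Fin (n + 1) → Fin p) :=
    { toFun := fun τi => Fin.snoc τi.1 τi.2
      invFun := fun σ => (Fin.init σ, σ (Fin.last n))
      left_inv := fun τi => by simp [Fin.init_snoc, Fin.snoc_last]
      right_inv := fun σ => by simp [Fin.snoc_init_self] }
  rw [← E.sum_comp (fun σ => f (fun k => if h : k < n + 1 then σ ⟨k, h⟩ else ⟨0, hp⟩))]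
  rw [Fintype.sum_prod_type]
  exact Finset.sum_congr rfl fun τ _ => Finset.sum_congr rfl fun i _ => by
    simp only [E, Equiv.coe_fn_mk]
    rw [e τ i]

lemma avg_mono (p : ℕ) (hp : 0 < p) (m : ℕ) {f g : (ℕ → Fin p) → ℝ}
    (h : ∀ ω, f ω ≤ g ω) : avg p hp m f ≤ avg p hp m g := by
  unfold avg
  apply div_le_div_of_nonneg_right ?_ (by positivity)
  exact Finset.sum_le_sum fun σ _ => h _

lemma avg_add (p : ℕ) (hp : 0 < p) (m : ℕ) (f g : (ℕ → Fin p) → ℝ) :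
    avg p hp m (fun ω => f ω + g ω) = avg p hp m f + avg p hp m g := by
  unfold avg; rw [← add_div, ← Finset.sum_add_distrib]

lemma avg_mul (p : ℕ) (hp : 0 < p) (m : ℕ) (c : ℝ) (f : (ℕ → Fin p) → ℝ) :
    avg p hp m (fun ω => c * f ω) = c * avg p hp m f := by
  unfold avg; rw [← Finset.mul_sum, mul_div_assoc]

lemma avg_fsum (p : ℕ) (hp : 0 < p) (m : ℕ) {ι : Type*} [Fintype ι] (f : ι → (ℕ → Fin p) → ℝ) :
    avg p hp m (fun ω => ∑ i, f i ω) = ∑ i, avg p hp m (f i) := by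
  unfold avg; rw [← Finset.sum_div, Finset.sum_comm]

set_option maxHeartbeats 2000000 in
/-- **Lemma SHBM:lem1.**  Let `x†` be the `x₀`-minimal norm solution of `A x = y` and
assume the source condition `x† − x₀ = A* λ†`.  With the exact-data heavy-ball iterates
`x`, the dual sequence `λ` (recursion (SHB10)), `u n = λ n + n (λ n − λ (n−1))` and
`r n = ∑_i (1/η i) ‖u n i − λ† i‖²`, for all `n ≥ 0`:
`E[r (n+1) + ((n+2)/p) ‖x n − x†‖²]
   ≤ E[r n + (n/p) ‖x (n−1) − x†‖²] + (1/p) ∑_i η i E[‖A i (x n) − y i‖²]`. -/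
theorem stmt_5 {p : ℕ} (hp : 0 < p) {X : Type*} [NormedAddCommGroup X]
    [InnerProductSpace ℝ X] [CompleteSpace X]
    {Y : Fin p → Type*} [∀ i, NormedAddCommGroup (Y i)] [∀ i, InnerProductSpace ℝ (Y i)]
    [∀ i, CompleteSpace (Y i)]
    (A : ∀ i, X →L[ℝ] Y i) (y : ∀ i, Y i)
    (η : Fin p → ℝ) (hη : ∀ i, 0 < η i)
    (x₀ xdag : X)
    (hdag : ∀ i, (A i) xdag = y i)
    (hmin : ∀ x' : X, (∀ i, (A i) x' = y i) → ‖xdag - x₀‖ ≤ ‖x' - x₀‖)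
    (lamdag : ∀ j, Y j)
    (hsource : xdag - x₀ = ∑ j, (A j).adjoint (lamdag j))
    (x : (ℕ → Fin p) → ℕ → X)
    (hx0 : ∀ ω, x ω 0 = x₀)
    (hx : ∀ ω, ∀ n : ℕ, x ω (n + 1) = x ω n
      - (((n : ℝ) + 2)⁻¹ * η (ω n)) • ((A (ω n)).adjoint ((A (ω n)) (x ω n) - y (ω n)))
      + ((n : ℝ) / ((n : ℝ) + 2)) • (x ω n - x ω (n - 1)))
    (lam : (ℕ → Fin p) → ℕ → ∀ j, Y j)
    (hlam0 : ∀ ω, lam ω 0 = 0)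
    (hlam : ∀ ω, ∀ n : ℕ,
      (∀ j : Fin p, j ≠ ω n → lam ω (n + 1) j =
        lam ω n j + ((n : ℝ) / ((n : ℝ) + 2)) • (lam ω n j - lam ω (n - 1) j)) ∧
      lam ω (n + 1) (ω n) =
        lam ω n (ω n) + ((n : ℝ) / ((n : ℝ) + 2)) • (lam ω n (ω n) - lam ω (n - 1) (ω n))
          - (((n : ℝ) + 2)⁻¹ * η (ω n)) • ((A (ω n)) (x ω n) - y (ω n)))
    (u : (ℕ → Fin p) → ℕ → ∀ j, Y j)
    (hu : ∀ ω n j, u ω n j = lam ω n j + (n : ℝ) • (lam ω n j - lam ω (n - 1) j))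
    (r : (ℕ → Fin p) → ℕ → ℝ)
    (hr : ∀ ω n, r ω n = ∑ j, (η j)⁻¹ * ‖u ω n j - lamdag j‖ ^ 2) :
    ∀ n : ℕ,
      avg p hp (n + 1) (fun ω => r ω (n + 1) + (((n : ℝ) + 2) / p) * ‖x ω n - xdag‖ ^ 2)
        ≤ avg p hp n (fun ω => r ω n + ((n : ℝ) / p) * ‖x ω (n - 1) - xdag‖ ^ 2)
          + (1 / p) * ∑ i, η i * avg p hp n (fun ω => ‖(A i) (x ω n) - y i‖ ^ 2) := by
  have hne : ∀ m : ℕ, ((m:ℝ) + 2) ≠ 0 := fun m => by positivity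
  have hp' : (0:ℝ) < p := by exact_mod_cast hp
  -- dependence on first n coordinates only
  have hdep : ∀ n : ℕ, ∀ ω ω' : ℕ → Fin p, (∀ k, k < n → ω k = ω' k) →
      x ω n = x ω' n ∧ lam ω n = lam ω' n := by
    intro n
    induction n using Nat.strong_induction_on with
    | _ n IH =>
      match n with
      | 0 => intro ω ω' h; simp [hx0, hlam0]
      | (m+1) =>
        intro ω ω' h
        obtain ⟨hxm, hlm⟩ := IH m (by omega) ω ω' (fun k hk => h k (by omega))
        obtain ⟨hxm1, hlm1⟩ := IH (m-1) (by omega) ω ω' (fun k hk => h k (by omega))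
        have hωm : ω m = ω' m := h m (by omega)
        constructor
        · rw [hx ω m, hx ω' m, hxm, hxm1, hωm]
        · funext j
          by_cases hj : j = ω m
          · subst hj
            have e2 := (hlam ω m).2
            have e2' := (hlam ω' m).2
            rw [← hωm] at e2'
            rw [e2, e2', hlm, hlm1, hxm]
          · have e1 := (hlam ω m).1 j hj
            have e1' := (hlam ω' m).1 j (by rw [← hωm]; exact hj)
            rw [e1, e1', hlm, hlm1]
  -- recursion for u
  have hurec : ∀ (ω : ℕ → Fin p) (n : ℕ),
      (∀ j, j ≠ ω n → u ω (n + 1) j = u ω n j) ∧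
      u ω (n + 1) (ω n) = u ω n (ω n) - η (ω n) • ((A (ω n)) (x ω n) - y (ω n)) := by
    intro ω n
    have h1 : ((n:ℝ) + 2) ≠ 0 := hne n
    constructor
    · intro j hj
      rw [hu, hu, Nat.add_sub_cancel, (hlam ω n).1 j hj]
      push_cast
      match_scalars <;> field_simp <;> ring
    · rw [hu, hu, Nat.add_sub_cancel, (hlam ω n).2]
      push_cast
      match_scalars <;> field_simp <;> ring
  -- dual representation
  have hw : ∀ (ω : ℕ → Fin p) (n : ℕ),
      x ω n + (n : ℝ) • (x ω n - x ω (n - 1))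
        = x₀ + ∑ j, (A j).adjoint (u ω n j) := by
    intro ω n
    induction n with
    | zero => simp [hx0, hu, hlam0]
    | succ m IH =>
      have h1 : ((m:ℝ) + 2) ≠ 0 := hne m
      have hsum : ∑ j, (A j).adjoint (u ω (m + 1) j)
          = (∑ j, (A j).adjoint (u ω m j))
            - η (ω m) • (A (ω m)).adjoint ((A (ω m)) (x ω m) - y (ω m)) := by
        rw [← Finset.sum_erase_add _ _ (Finset.mem_univ (ω m)),
            ← Finset.sum_erase_add _ (fun j => (A j).adjoint (u ω m j)) (Finset.mem_univ (ω m))]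
        rw [Finset.sum_congr rfl
          (fun j hj => by rw [(hurec ω m).1 j (Finset.ne_of_mem_erase hj)]), (hurec ω m).2]
        rw [map_sub, map_smul]
        abel
      have hS : ∑ j, (A j).adjoint (u ω m j)
          = x ω m + (m : ℝ) • (x ω m - x ω (m - 1)) - x₀ := by
        rw [eq_sub_iff_add_eq, add_comm]; exact IH.symm
      rw [hsum, hS, hx ω m, Nat.add_sub_cancel]
      push_cast
      match_scalars <;> field_simp <;> ring
  -- one-step change of r when coordinate n is set to i
  have hrstep : ∀ (ω : ℕ → Fin p) (n : ℕ) (i : Fin p),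
      r (Function.update ω n i) (n + 1)
        = r ω n - 2 * (inner ℝ (u ω n i - lamdag i) ((A i) (x ω n) - y i) : ℝ)
          + η i * ‖(A i) (x ω n) - y i‖ ^ 2 := by
    intro ω n i
    set ω' := Function.update ω n i with hω'
    have hag : ∀ k, k < n → ω' k = ω k := fun k hk => Function.update_of_ne (by omega) _ _
    have hxeq : x ω' n = x ω n := (hdep n ω' ω hag).1
    have hueq : ∀ j, u ω' n j = u ω n j := by
      intro j
      rw [hu, hu, (hdep n ω' ω hag).2, (hdep (n-1) ω' ω (fun k hk => hag k (by omega))).2]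
    have hii : ω' n = i := Function.update_self _ _ _
    have h1 : ∀ j, j ≠ i → u ω' (n + 1) j = u ω n j := by
      intro j hj
      rw [(hurec ω' n).1 j (by rw [hii]; exact hj), hueq]
    have h2 : u ω' (n + 1) i = u ω n i - η i • ((A i) (x ω n) - y i) := by
      have h3 := (hurec ω' n).2
      rw [hii, hxeq, hueq] at h3
      exact h3
    rw [hr, hr]
    rw [← Finset.sum_erase_add _ _ (Finset.mem_univ i),
        ← Finset.sum_erase_add _ (fun j => (η j)⁻¹ * ‖u ω n j - lamdag j‖ ^ 2) (Finset.mem_univ i)]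
    rw [Finset.sum_congr rfl (fun j hj => by rw [h1 j (Finset.ne_of_mem_erase hj)]), h2]
    have hηi := hη i
    have hexp : ‖u ω n i - η i • ((A i) (x ω n) - y i) - lamdag i‖ ^ 2
        = ‖u ω n i - lamdag i‖ ^ 2
          - 2 * η i * (inner ℝ (u ω n i - lamdag i) ((A i) (x ω n) - y i) : ℝ)
          + (η i) ^ 2 * ‖(A i) (x ω n) - y i‖ ^ 2 := by
      rw [sub_right_comm, norm_sub_sq_real, real_inner_smul_right, norm_smul,
          Real.norm_eq_abs, abs_of_pos hηi]
      ring
    rw [hexp]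
    field_simp
    ring
  -- sum of inner products
  have hinner : ∀ (ω : ℕ → Fin p) (n : ℕ),
      ∑ i, (inner ℝ (u ω n i - lamdag i) ((A i) (x ω n) - y i) : ℝ)
        = (inner ℝ (x ω n - xdag + (n : ℝ) • (x ω n - x ω (n - 1))) (x ω n - xdag) : ℝ) := by
    intro ω n
    have h3 : ∑ i, (A i).adjoint (u ω n i - lamdag i)
        = x ω n - xdag + (n : ℝ) • (x ω n - x ω (n - 1)) := by
      have h4 : ∑ j, (A j).adjoint (u ω n j)
          = x ω n + (n : ℝ) • (x ω n - x ω (n - 1)) - x₀ := by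
        rw [eq_sub_iff_add_eq, add_comm]; exact (hw ω n).symm
      simp_rw [map_sub]
      rw [Finset.sum_sub_distrib, ← hsource, h4]
      abel
    calc ∑ i, (inner ℝ (u ω n i - lamdag i) ((A i) (x ω n) - y i) : ℝ)
        = ∑ i, (inner ℝ ((A i).adjoint (u ω n i - lamdag i)) (x ω n - xdag) : ℝ) := by
          refine Finset.sum_congr rfl fun i _ => ?_
          rw [ContinuousLinearMap.adjoint_inner_left, map_sub, hdag]
      _ = (inner ℝ (∑ i, (A i).adjoint (u ω n i - lamdag i)) (x ω n - xdag) : ℝ) := by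
          rw [sum_inner]
      _ = _ := by rw [h3]
  -- key pointwise bound
  have hkey : ∀ (ω : ℕ → Fin p) (n : ℕ),
      (∑ i : Fin p, (r (Function.update ω n i) (n + 1)
          + (((n : ℝ) + 2) / p) * ‖x (Function.update ω n i) n - xdag‖ ^ 2)) / p
        ≤ r ω n + ((n : ℝ) / p) * ‖x ω (n - 1) - xdag‖ ^ 2
          + (1 / p) * ∑ i, η i * ‖(A i) (x ω n) - y i‖ ^ 2 := by
    intro ω n
    have hxupd : ∀ i : Fin p, x (Function.update ω n i) n = x ω n := by
      intro i
      have hag : ∀ k, k < n → (Function.update ω n i) k = ω k := fun k hk =>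
        Function.update_of_ne (by omega) _ _
      exact (hdep n _ ω hag).1
    have hsum : ∑ i : Fin p, (r (Function.update ω n i) (n + 1)
          + (((n : ℝ) + 2) / p) * ‖x (Function.update ω n i) n - xdag‖ ^ 2)
        = (p : ℝ) * r ω n
          - 2 * (inner ℝ (x ω n - xdag + (n : ℝ) • (x ω n - x ω (n - 1))) (x ω n - xdag) : ℝ)
          + (∑ i, η i * ‖(A i) (x ω n) - y i‖ ^ 2)
          + (p : ℝ) * ((((n : ℝ) + 2) / p) * ‖x ω n - xdag‖ ^ 2) := by
      simp_rw [hrstep, hxupd]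
      rw [Finset.sum_add_distrib, Finset.sum_add_distrib, Finset.sum_sub_distrib,
        Finset.sum_const, Finset.sum_const, Finset.card_univ, Fintype.card_fin,
        ← Finset.mul_sum, hinner ω n, nsmul_eq_mul, nsmul_eq_mul]
    rw [hsum, div_le_iff₀ hp']
    have hd : x ω n - x ω (n - 1) = (x ω n - xdag) - (x ω (n - 1) - xdag) := by abel
    have hS : ∀ a b : X, (inner ℝ (a + (n : ℝ) • (a - b)) a : ℝ)
        = ‖a‖ ^ 2 + (n : ℝ) * (‖a‖ ^ 2 - inner ℝ a b) := by
      intro a b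
      rw [inner_add_left, real_inner_smul_left, inner_sub_left,
        real_inner_self_eq_norm_sq, real_inner_comm b a]
    have he2 : (p : ℝ) * ((((n : ℝ) + 2) / p) * ‖x ω n - xdag‖ ^ 2)
        = ((n : ℝ) + 2) * ‖x ω n - xdag‖ ^ 2 := by
      field_simp
    have he3 : (r ω n + ((n : ℝ) / p) * ‖x ω (n - 1) - xdag‖ ^ 2
          + (1 / p) * ∑ i, η i * ‖(A i) (x ω n) - y i‖ ^ 2) * p
        = (p : ℝ) * r ω n + (n : ℝ) * ‖x ω (n - 1) - xdag‖ ^ 2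
          + ∑ i, η i * ‖(A i) (x ω n) - y i‖ ^ 2 := by
      field_simp
    rw [hd, hS (x ω n - xdag) (x ω (n - 1) - xdag), he2, he3]
    have hq : (0 : ℝ) ≤ (n : ℝ) * ‖(x ω n - xdag) - (x ω (n - 1) - xdag)‖ ^ 2 := by positivity
    have hexp2 : ‖(x ω n - xdag) - (x ω (n - 1) - xdag)‖ ^ 2
        = ‖x ω n - xdag‖ ^ 2 - 2 * (inner ℝ (x ω n - xdag) (x ω (n - 1) - xdag) : ℝ)
          + ‖x ω (n - 1) - xdag‖ ^ 2 := norm_sub_sq_real _ _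
    nlinarith [hq, hexp2]
  -- assembly
  intro n
  rw [avg_succ]
  have h1 := avg_mono p hp n (fun ω => hkey ω n)
  have h2 : avg p hp n (fun ω => r ω n + ((n : ℝ) / p) * ‖x ω (n - 1) - xdag‖ ^ 2
        + (1 / p) * ∑ i, η i * ‖(A i) (x ω n) - y i‖ ^ 2)
      = avg p hp n (fun ω => r ω n + ((n : ℝ) / p) * ‖x ω (n - 1) - xdag‖ ^ 2)
        + (1 / p) * ∑ i, η i * avg p hp n (fun ω => ‖(A i) (x ω n) - y i‖ ^ 2) := by
    rw [avg_add, avg_mul, avg_fsum p hp n (fun i ω => η i * ‖(A i) (x ω n) - y i‖ ^ 2)]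
    congr 1
    congr 1
    exact Finset.sum_congr rfl fun i _ => avg_mul p hp n (η i) _
  rw [← h2]
  exact h1
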